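/- Under the same hypotheses as the previous lemma, the iterates satisfy lim‖x_n − PT₁ x_n‖ = 0 and lim‖x_n − PT₂ x_n‖ = 0. -/

import Mathlib

/-!
Fix a common fixed point `p`. Because `φ` grows at most linearly, `‖(PTᵢ)ⁿ z - p‖` is bounded
by `(1 + aₙ) ‖z - p‖ + bₙ` with summable `aₙ, bₙ ≥ 0`, so `‖xₙ - p‖` is quasi-Fejér and
converges to some `l`; so does `‖yₙ - p‖`. Now `x_{n+1} - p` and `yₙ - p` are convex combinations,
with weights in `[ε, 1 - ε]`, of vectors whose norms are asymptotically at most `l`, while their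
own norms tend to `l`. By uniform convexity (Schu's lemma) the vectors being combined come
together: `‖(PT₁)ⁿ yₙ - (PT₂)ⁿ yₙ‖ → 0` and `‖xₙ - (PT₁)ⁿ xₙ‖ → 0`. The triangle inequality and
the uniform Lipschitz bound then give `‖x_{n+1} - xₙ‖ → 0` and `‖xₙ - (PT₂)ⁿ xₙ‖ → 0`, and comparing
`(PTᵢ)^{n+1} x_{n+1}` with `PTᵢ x_{n+1}` yields `‖xₙ - PTᵢ xₙ‖ → 0`.
-/

open Filter Set Topology

section RealSequences

theorem exists_tendsto_of_le_add_of_summable {d c : ℕ → ℝ} (hd : BddBelow (range d))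
    (hc : Summable c) (hdc : ∀ᶠ n in atTop, d (n + 1) ≤ d n + c n) :
    ∃ l, Tendsto d atTop (𝓝 l) := by
  obtain ⟨N, hN⟩ := eventually_atTop.1 hdc
  set g : ℕ → ℝ := fun n => d (n + N) - ∑ k ∈ Finset.range (n + N), c k
  have hg : Antitone g := antitone_nat_of_succ_le fun n => by
    have := hN (n + N) le_add_self
    simp only [g, Nat.add_right_comm n 1 N, Finset.sum_range_succ]
    linarith
  have hgb : BddBelow (range g) := by
    obtain ⟨m, hm⟩ := hd
    obtain ⟨s, hs⟩ := hc.hasSum.tendsto_sum_nat.bddAbove_range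
    refine ⟨m - s, forall_mem_range.2 fun n => ?_⟩
    have := hm (mem_range_self (n + N))
    have := hs (mem_range_self (n + N))
    simp only [g]
    linarith
  refine ⟨(⨅ n, g n) + ∑' k, c k, (tendsto_add_atTop_iff_nat N).1 ?_⟩
  have hsum := hc.hasSum.tendsto_sum_nat.comp (tendsto_add_atTop_nat N)
  simpa [g] using (tendsto_atTop_ciInf hg hgb).add hsum

theorem exists_tendsto_of_le_one_add_mul_add {d a b : ℕ → ℝ} (hd : ∀ n, 0 ≤ d n)
    (ha : ∀ n, 0 ≤ a n) (hb : ∀ n, 0 ≤ b n) (has : Summable a) (hbs : Summable b)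
    (hdab : ∀ᶠ n in atTop, d (n + 1) ≤ (1 + a n) * d n + b n) :
    ∃ l, Tendsto d atTop (𝓝 l) := by
  have hpos : ∀ n, 0 < d n + 1 := fun n => by linarith [hd n]
  -- `d (n + 1) + 1 ≤ (1 + (a n + b n)) * (d n + 1)`: taking logarithms makes the errors additive.
  have hlog : ∀ᶠ n in atTop,
      Real.log (d (n + 1) + 1) ≤ Real.log (d n + 1) + (a n + b n) := by
    filter_upwards [hdab] with n hn
    have hs : 0 < 1 + (a n + b n) := by linarith [ha n, hb n]
    calc Real.log (d (n + 1) + 1) ≤ Real.log ((1 + (a n + b n)) * (d n + 1)) :=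
          Real.log_le_log (hpos _) (by nlinarith [mul_nonneg (hb n) (hd n), ha n])
      _ = Real.log (d n + 1) + Real.log (1 + (a n + b n)) := by
          rw [Real.log_mul hs.ne' (hpos n).ne', add_comm]
      _ ≤ Real.log (d n + 1) + (a n + b n) := by
          linarith [Real.log_le_sub_one_of_pos hs]
  obtain ⟨m, hm⟩ := exists_tendsto_of_le_add_of_summable (d := fun n => Real.log (d n + 1))
    ⟨0, forall_mem_range.2 fun n => Real.log_nonneg (by linarith [hd n])⟩ (has.add hbs) hlog
  refine ⟨Real.exp m - 1, ?_⟩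
  simpa [Real.exp_log (hpos _)] using ((Real.continuous_exp.tendsto m).comp hm).sub_const 1

theorem Filter.Tendsto.one_add_mul_add {a b r : ℕ → ℝ} {l : ℝ} (ha : Tendsto a atTop (𝓝 0))
    (hb : Tendsto b atTop (𝓝 0)) (hr : Tendsto r atTop (𝓝 l)) :
    Tendsto (fun n => (1 + a n) * r n + b n) atTop (𝓝 l) := by
  simpa using (((tendsto_const_nhds (x := (1 : ℝ))).add ha).mul hr).add hb

theorem exists_tendsto_of_le_one_add_mul_add_of_le_one_add_mul_add {d e a b : ℕ → ℝ}
    (hd : ∀ n, 0 ≤ d n) (ha : ∀ n, 0 ≤ a n) (hb : ∀ n, 0 ≤ b n) (has : Summable a)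
    (hbs : Summable b) (hed : ∀ᶠ n in atTop, e n ≤ (1 + a n) * d n + b n)
    (hde : ∀ᶠ n in atTop, d (n + 1) ≤ (1 + a n) * e n + b n) :
    ∃ l, Tendsto d atTop (𝓝 l) ∧ Tendsto e atTop (𝓝 l) := by
  set A := ∑' k, a k
  have hA : ∀ n, a n ≤ A := fun n => has.le_tsum n fun j _ => ha j
  obtain ⟨l, hl⟩ := exists_tendsto_of_le_one_add_mul_add (a := fun n => (2 + A) * a n)
    (b := fun n => (2 + A) * b n) hd (fun n => by nlinarith [ha n, hA n])
    (fun n => by nlinarith [ha n, hA n, hb n]) (has.mul_left _) (hbs.mul_left _) (by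
      filter_upwards [hed, hde] with n hen hdn
      have := mul_le_mul_of_nonneg_left hen (by linarith [ha n] : 0 ≤ 1 + a n)
      nlinarith [mul_le_mul_of_nonneg_left (hA n) (mul_nonneg (ha n) (hd n)),
        mul_le_mul_of_nonneg_left (hA n) (hb n)])
  have ha0 := has.tendsto_atTop_zero
  have hb0 := hbs.tendsto_atTop_zero
  have hlo : Tendsto (fun n => (d (n + 1) - b n) / (1 + a n)) atTop (𝓝 l) := by
    simpa [Pi.div_def] using ((hl.comp (tendsto_add_atTop_nat 1)).sub hb0).div
      ((tendsto_const_nhds (x := (1 : ℝ))).add ha0) (by norm_num)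
  refine ⟨l, hl, tendsto_of_tendsto_of_tendsto_of_le_of_le' hlo (ha0.one_add_mul_add hb0 hl)
    ?_ hed⟩
  filter_upwards [hde] with n hn
  rw [div_le_iff₀ (by linarith [ha n])]
  linarith

theorem MonotoneOn.exists_le_add_mul_of_le_mul {φ : ℝ → ℝ} {M M' : ℝ}
    (hφ : MonotoneOn φ (Ici 0)) (hgrowth : ∀ κ ≥ M, φ κ ≤ M' * κ) :
    ∃ C D, 0 ≤ C ∧ 0 ≤ D ∧ ∀ s, 0 ≤ s → φ s ≤ C + D * s := by
  refine ⟨max (φ M) 0, max M' 0, le_max_right _ _, le_max_right _ _, fun s hs => ?_⟩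
  have hDs : 0 ≤ max M' 0 * s := mul_nonneg (le_max_right _ _) hs
  rcases le_total M s with h | h
  · have : M' * s ≤ max M' 0 * s := mul_le_mul_of_nonneg_right (le_max_left _ _) hs
    linarith [hgrowth s h, le_max_right (φ M) 0]
  · linarith [hφ hs (hs.trans h) h, le_max_left (φ M) 0]

end RealSequences

section UniformConvexity

variable {E : Type*} [SeminormedAddCommGroup E] [NormedSpace ℝ E] [UniformConvexSpace E]

theorem exists_forall_norm_add_le_two_sub_mul {c : ℝ} (hc : 0 < c) :
    ∃ δ, 0 < δ ∧ ∀ R, 0 < R → ∀ u v : E, ‖u‖ ≤ R → ‖v‖ ≤ R → c * R ≤ ‖u - v‖ →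
      ‖u + v‖ ≤ (2 - δ) * R := by
  obtain ⟨δ, hδ, h⟩ := exists_forall_closed_ball_dist_add_le_two_sub E hc
  refine ⟨δ, hδ, fun R hR u v hu hv huv => ?_⟩
  have hscale : ∀ w : E, ‖R⁻¹ • w‖ = ‖w‖ / R := fun w => by
    rw [norm_smul_of_nonneg (inv_nonneg.2 hR.le), inv_mul_eq_div]
  have key := @h (R⁻¹ • u) (by rw [hscale, div_le_one hR]; exact hu)
    (R⁻¹ • v) (by rw [hscale, div_le_one hR]; exact hv)
    (by rw [← smul_sub, hscale, le_div_iff₀ hR]; exact huv)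
  rwa [← smul_add, hscale, div_le_iff₀ hR] at key

theorem exists_forall_norm_one_sub_smul_add_smul_le {c ε : ℝ} (hc : 0 < c) (hε : 0 ≤ ε) :
    ∃ δ, 0 < δ ∧ ∀ R, 0 < R → ∀ t ∈ Icc ε (1 - ε), ∀ u v : E, ‖u‖ ≤ R → ‖v‖ ≤ R →
      c * R ≤ ‖u - v‖ → ‖(1 - t) • u + t • v‖ ≤ (1 - ε * δ) * R := by
  obtain ⟨δ, hδ, h⟩ := exists_forall_norm_add_le_two_sub_mul (E := E) hc
  refine ⟨δ, hδ, fun R hR t ⟨htε, htε'⟩ u v hu hv huv => ?_⟩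
  have half : ∀ s (u v : E), ε ≤ s → 2 * s ≤ 1 → ‖u + v‖ ≤ (2 - δ) * R → ‖u‖ ≤ R →
      ‖(1 - s) • u + s • v‖ ≤ (1 - ε * δ) * R := by
    intro s u v hεs hs huv hu
    have hs0 : 0 ≤ s := hε.trans hεs
    calc ‖(1 - s) • u + s • v‖ = ‖s • (u + v) + (1 - 2 * s) • u‖ := by congr 1; module
      _ ≤ s * ‖u + v‖ + (1 - 2 * s) * ‖u‖ := by
        refine (norm_add_le _ _).trans ?_
        rw [norm_smul_of_nonneg hs0, norm_smul_of_nonneg (by linarith)]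
      _ ≤ s * ((2 - δ) * R) + (1 - 2 * s) * R := by gcongr
      _ ≤ (1 - ε * δ) * R := by
        nlinarith [mul_nonneg (mul_nonneg (sub_nonneg.2 hεs) hδ.le) hR.le]
  rcases le_total (2 * t) 1 with ht | ht
  · exact half t u v htε ht (h R hR u v hu hv huv) hu
  · have := half (1 - t) v u (by linarith) (by linarith)
      (by rw [add_comm]; exact h R hR u v hu hv huv) hv
    rwa [sub_sub_cancel, add_comm] at this

/-- Schu's lemma. -/
theorem tendsto_norm_sub_of_tendsto_norm_one_sub_smul_add_smul {u v : ℕ → E} {t R : ℕ → ℝ}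
    {ε r : ℝ} (hε : 0 < ε) (ht : ∀ n, t n ∈ Icc ε (1 - ε))
    (hu : ∀ᶠ n in atTop, ‖u n‖ ≤ R n) (hv : ∀ᶠ n in atTop, ‖v n‖ ≤ R n)
    (hR : Tendsto R atTop (𝓝 r))
    (hw : Tendsto (fun n => ‖(1 - t n) • u n + t n • v n‖) atTop (𝓝 r)) :
    Tendsto (fun n => ‖u n - v n‖) atTop (𝓝 0) := by
  rcases (ge_of_tendsto' hw fun n => norm_nonneg _).eq_or_lt with rfl | hr
  · refine squeeze_zero' (Eventually.of_forall fun n => norm_nonneg _) ?_ (by simpa using hR.add hR)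
    filter_upwards [hu, hv] with n hun hvn
    exact (norm_sub_le _ _).trans (add_le_add hun hvn)
  refine tendsto_order.2 ⟨fun c hc => Eventually.of_forall fun n => hc.trans_le (norm_nonneg _),
    fun c hc => ?_⟩
  obtain ⟨δ, hδ, huc⟩ := exists_forall_norm_one_sub_smul_add_smul_le (E := E)
    (div_pos hc (by linarith : 0 < r + 1)) hε.le
  have hlt : (1 - ε * δ) * r < r := by nlinarith [mul_pos (mul_pos hε hδ) hr]
  filter_upwards [hu, hv, (hR.const_mul (1 - ε * δ)).eventually_lt hw hlt,
    hR.eventually (eventually_lt_nhds (lt_add_one r)), hR.eventually (eventually_gt_nhds hr)]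
    with n hun hvn hwn hRn hRn'
  by_contra! hcn
  have hsep : c / (r + 1) * R n ≤ ‖u n - v n‖ := by
    refine le_trans ?_ hcn
    rw [div_mul_eq_mul_div, div_le_iff₀ (by linarith)]
    gcongr
  exact (huc (R n) hRn' (t n) (ht n) (u n) (v n) hun hvn hsep).not_gt hwn

end UniformConvexity

section Iterates

variable {E : Type*} [SeminormedAddCommGroup E]

def IsUniformlyLipschitzOn (S : E → E) (K : Set E) (L : ℝ) : Prop :=
  ∀ x ∈ K, ∀ y ∈ K, ∀ n ≥ 1, ‖S^[n] x - S^[n] y‖ ≤ L * ‖x - y‖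

def IsTotalAsymptoticallyNonexpansiveOn (S : E → E) (K : Set E) (μ ν : ℕ → ℝ) (φ : ℝ → ℝ) :
    Prop :=
  ∀ x ∈ K, ∀ y ∈ K, ∀ n ≥ 1, ‖S^[n] x - S^[n] y‖ ≤ ‖x - y‖ + μ n * φ ‖x - y‖ + ν n

theorem IsTotalAsymptoticallyNonexpansiveOn.norm_iterate_sub_le {S : E → E} {K : Set E}
    {μ ν : ℕ → ℝ} {φ : ℝ → ℝ} (hS : IsTotalAsymptoticallyNonexpansiveOn S K μ ν φ)
    (hμ : ∀ n, 0 ≤ μ n) {C D : ℝ} (hφ : ∀ s, 0 ≤ s → φ s ≤ C + D * s) {p : E} (hp : p ∈ K)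
    (hfix : S p = p) {z : E} (hz : z ∈ K) {n : ℕ} (hn : 1 ≤ n) :
    ‖S^[n] z - p‖ ≤ (1 + D * μ n) * ‖z - p‖ + (C * μ n + ν n) := by
  have h := hS z hz p hp n hn
  rw [Function.iterate_fixed hfix] at h
  nlinarith [mul_le_mul_of_nonneg_left (hφ _ (norm_nonneg (z - p))) (hμ n)]

theorem norm_sub_le_norm_sub_add_norm_sub_add_norm_sub (u v w z : E) :
    ‖u - z‖ ≤ ‖u - v‖ + ‖v - w‖ + ‖w - z‖ := by
  simpa only [dist_eq_norm] using dist_triangle4 u v w z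

theorem tendsto_norm_sub_apply_of_tendsto_norm_sub_iterate {S : E → E} {K : Set E} {L : ℝ}
    {x : ℕ → E} (hL : 0 ≤ L) (hSK : MapsTo S K K) (hS : IsUniformlyLipschitzOn S K L)
    (hxK : ∀ n, x n ∈ K) (hstep : Tendsto (fun n => ‖x (n + 1) - x n‖) atTop (𝓝 0))
    (hfix : Tendsto (fun n => ‖x n - S^[n] (x n)‖) atTop (𝓝 0)) :
    Tendsto (fun n => ‖x n - S (x n)‖) atTop (𝓝 0) := by
  rw [← tendsto_add_atTop_iff_nat 1]
  refine squeeze_zero (fun n => norm_nonneg _) (fun n => ?_) (by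
    simpa using ((hfix.comp (tendsto_add_atTop_nat 1)).add (hstep.const_mul L)).add
      ((hfix.add hstep).const_mul L))
  -- `S^[n + 1] (x n) = S (S^[n] (x n))` is compared with `S (x (n + 1))` by the case `n = 1`.
  have h₁ := hS _ (hxK (n + 1)) _ (hxK n) (n + 1) (by omega)
  have h₂ := hS _ (hSK.iterate n (hxK n)) _ (hxK (n + 1)) 1 le_rfl
  rw [Function.iterate_one, ← Function.iterate_succ_apply' S n] at h₂
  have h₃ : ‖S^[n] (x n) - x (n + 1)‖ ≤ ‖x n - S^[n] (x n)‖ + ‖x (n + 1) - x n‖ := by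
    rw [norm_sub_rev (x n), norm_sub_rev (x (n + 1))]
    exact norm_sub_le_norm_sub_add_norm_sub _ _ _
  calc ‖x (n + 1) - S (x (n + 1))‖
      ≤ ‖x (n + 1) - S^[n + 1] (x (n + 1))‖ + ‖S^[n + 1] (x (n + 1)) - S^[n + 1] (x n)‖
        + ‖S^[n + 1] (x n) - S (x (n + 1))‖ :=
        norm_sub_le_norm_sub_add_norm_sub_add_norm_sub _ _ _ _
    _ ≤ ‖x (n + 1) - S^[n + 1] (x (n + 1))‖ + L * ‖x (n + 1) - x n‖
        + L * (‖x n - S^[n] (x n)‖ + ‖x (n + 1) - x n‖) := by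
      gcongr
      exact h₂.trans (mul_le_mul_of_nonneg_left h₃ hL)

end Iterates

section Iteration

variable {E : Type*} [SeminormedAddCommGroup E] [NormedSpace ℝ E]

theorem norm_one_sub_smul_add_smul_sub_le {u v p : E} {t R : ℝ} (ht : t ∈ Icc 0 1)
    (hu : ‖u - p‖ ≤ R) (hv : ‖v - p‖ ≤ R) : ‖(1 - t) • u + t • v - p‖ ≤ R := by
  simpa only [mem_closedBall_iff_norm] using convex_closedBall p R (mem_closedBall_iff_norm.2 hu)
    (mem_closedBall_iff_norm.2 hv) (sub_nonneg.2 ht.2) ht.1 (sub_add_cancel 1 t)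

theorem norm_one_sub_smul_add_smul_sub_left_le {u v : E} {t : ℝ} (ht : t ∈ Icc 0 1) :
    ‖(1 - t) • u + t • v - u‖ ≤ ‖u - v‖ := by
  rw [← AffineMap.lineMap_apply_module, ← dist_eq_norm, dist_lineMap_left, dist_eq_norm,
    Real.norm_of_nonneg ht.1]
  exact mul_le_of_le_one_left (norm_nonneg _) ht.2

theorem norm_one_sub_smul_add_smul_sub_right_le {u v : E} {t : ℝ} (ht : t ∈ Icc 0 1) :
    ‖(1 - t) • u + t • v - v‖ ≤ ‖u - v‖ := by
  rw [← AffineMap.lineMap_apply_module, ← dist_eq_norm, dist_lineMap_right, dist_eq_norm,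
    Real.norm_of_nonneg (sub_nonneg.2 ht.2)]
  exact mul_le_of_le_one_left (norm_nonneg _) (by linarith [ht.1])

theorem tendsto_norm_succ_sub_and_norm_sub_iterate {K : Set E} {S₁ S₂ : E → E} {L : ℝ}
    {α β : ℕ → ℝ} {x y : ℕ → E} (hL : 0 ≤ L) (hLip₁ : IsUniformlyLipschitzOn S₁ K L)
    (hLip₂ : IsUniformlyLipschitzOn S₂ K L) (hα : ∀ n, α n ∈ Icc 0 1)
    (hβ : ∀ n, β n ∈ Icc 0 1) (hxK : ∀ n, x n ∈ K) (hyK : ∀ n ≥ 1, y n ∈ K)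
    (hy : ∀ n ≥ 1, y n = (1 - β n) • x n + β n • S₁^[n] (x n))
    (hx : ∀ n ≥ 1, x (n + 1) = (1 - α n) • S₁^[n] (y n) + α n • S₂^[n] (y n))
    (hΓ : Tendsto (fun n => ‖S₁^[n] (y n) - S₂^[n] (y n)‖) atTop (𝓝 0))
    (hΔ : Tendsto (fun n => ‖x n - S₁^[n] (x n)‖) atTop (𝓝 0)) :
    Tendsto (fun n => ‖x (n + 1) - x n‖) atTop (𝓝 0) ∧
      Tendsto (fun n => ‖x n - S₂^[n] (x n)‖) atTop (𝓝 0) := by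
  have hyx : ∀ n ≥ 1, ‖y n - x n‖ ≤ ‖x n - S₁^[n] (x n)‖ := fun n hn => by
    rw [hy n hn]; exact norm_one_sub_smul_add_smul_sub_left_le (hβ n)
  have hLip : ∀ S, IsUniformlyLipschitzOn S K L → ∀ n ≥ 1,
      ‖S^[n] (y n) - S^[n] (x n)‖ ≤ L * ‖x n - S₁^[n] (x n)‖ := fun S hS n hn =>
    (hS _ (hyK n hn) _ (hxK n) n hn).trans (mul_le_mul_of_nonneg_left (hyx n hn) hL)
  have hstep : ∀ n ≥ 1, ‖x (n + 1) - x n‖ ≤ ‖S₁^[n] (y n) - S₂^[n] (y n)‖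
      + L * ‖x n - S₁^[n] (x n)‖ + ‖x n - S₁^[n] (x n)‖ := fun n hn => by
    refine (norm_sub_le_norm_sub_add_norm_sub_add_norm_sub _ (S₁^[n] (y n)) (S₁^[n] (x n)) _).trans
      ?_
    gcongr
    · rw [hx n hn]; exact norm_one_sub_smul_add_smul_sub_left_le (hα n)
    · exact hLip S₁ hLip₁ n hn
    · rw [norm_sub_rev]
  have hΔ₂ : ∀ n ≥ 1, ‖x n - S₂^[n] (x n)‖ ≤ ‖x (n + 1) - x n‖
      + ‖S₁^[n] (y n) - S₂^[n] (y n)‖ + L * ‖x n - S₁^[n] (x n)‖ := fun n hn => by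
    refine (norm_sub_le_norm_sub_add_norm_sub_add_norm_sub _ (x (n + 1)) (S₂^[n] (y n)) _).trans ?_
    gcongr
    · rw [norm_sub_rev]
    · rw [hx n hn]; exact norm_one_sub_smul_add_smul_sub_right_le (hα n)
    · exact hLip S₂ hLip₂ n hn
  have hstep0 : Tendsto (fun n => ‖x (n + 1) - x n‖) atTop (𝓝 0) :=
    squeeze_zero' (Eventually.of_forall fun n => norm_nonneg _) (eventually_atTop.2 ⟨1, hstep⟩)
      (by simpa using (hΓ.add (hΔ.const_mul L)).add hΔ)
  exact ⟨hstep0, squeeze_zero' (Eventually.of_forall fun n => norm_nonneg _)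
    (eventually_atTop.2 ⟨1, hΔ₂⟩) (by simpa using (hstep0.add hΓ).add (hΔ.const_mul L))⟩

theorem tendsto_norm_sub_iterate_of_two_step_iteration [UniformConvexSpace E] {K : Set E}
    {S₁ S₂ : E → E} {L ε : ℝ} {p : E} {a b α β : ℕ → ℝ} {x y : ℕ → E} (hK : Convex ℝ K)
    (hS₁K : MapsTo S₁ K K) (hL : 0 ≤ L) (hLip₁ : IsUniformlyLipschitzOn S₁ K L)
    (hLip₂ : IsUniformlyLipschitzOn S₂ K L)
    (hS₁ : ∀ z ∈ K, ∀ n ≥ 1, ‖S₁^[n] z - p‖ ≤ (1 + a n) * ‖z - p‖ + b n)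
    (hS₂ : ∀ z ∈ K, ∀ n ≥ 1, ‖S₂^[n] z - p‖ ≤ (1 + a n) * ‖z - p‖ + b n)
    (ha : ∀ n, 0 ≤ a n) (hb : ∀ n, 0 ≤ b n) (has : Summable a) (hbs : Summable b)
    (hε : 0 < ε) (hα : ∀ n, α n ∈ Icc ε (1 - ε)) (hβ : ∀ n, β n ∈ Icc ε (1 - ε))
    (hxK : ∀ n, x n ∈ K) (hy : ∀ n ≥ 1, y n = (1 - β n) • x n + β n • S₁^[n] (x n))
    (hx : ∀ n ≥ 1, x (n + 1) = (1 - α n) • S₁^[n] (y n) + α n • S₂^[n] (y n)) :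
    Tendsto (fun n => ‖x (n + 1) - x n‖) atTop (𝓝 0) ∧
      Tendsto (fun n => ‖x n - S₁^[n] (x n)‖) atTop (𝓝 0) ∧
      Tendsto (fun n => ‖x n - S₂^[n] (x n)‖) atTop (𝓝 0) := by
  have hα₀ : ∀ n, α n ∈ Icc 0 1 := fun n => Icc_subset_Icc hε.le (by linarith) (hα n)
  have hβ₀ : ∀ n, β n ∈ Icc 0 1 := fun n => Icc_subset_Icc hε.le (by linarith) (hβ n)
  have hyK : ∀ n ≥ 1, y n ∈ K := fun n hn => by
    rw [hy n hn]
    exact hK (hxK n) (hS₁K.iterate n (hxK n)) (sub_nonneg.2 (hβ₀ n).2) (hβ₀ n).1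
      (sub_add_cancel 1 _)
  have hxp : ∀ n, ‖x n - p‖ ≤ (1 + a n) * ‖x n - p‖ + b n := fun n => by
    nlinarith [mul_nonneg (ha n) (norm_nonneg (x n - p)), hb n]
  have hyp : ∀ n ≥ 1, ‖y n - p‖ ≤ (1 + a n) * ‖x n - p‖ + b n := fun n hn => by
    rw [hy n hn]
    exact norm_one_sub_smul_add_smul_sub_le (hβ₀ n) (hxp n) (hS₁ _ (hxK n) n hn)
  have hxy : ∀ n ≥ 1, ‖x (n + 1) - p‖ ≤ (1 + a n) * ‖y n - p‖ + b n := fun n hn => by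
    rw [hx n hn]
    exact norm_one_sub_smul_add_smul_sub_le (hα₀ n) (hS₁ _ (hyK n hn) n hn) (hS₂ _ (hyK n hn) n hn)
  obtain ⟨l, hxl, hyl⟩ := exists_tendsto_of_le_one_add_mul_add_of_le_one_add_mul_add
    (fun n => norm_nonneg _) ha hb has hbs (eventually_atTop.2 ⟨1, hyp⟩)
    (eventually_atTop.2 ⟨1, hxy⟩)
  have ha0 := has.tendsto_atTop_zero
  have hb0 := hbs.tendsto_atTop_zero
  have hΓ : Tendsto (fun n => ‖S₁^[n] (y n) - S₂^[n] (y n)‖) atTop (𝓝 0) := by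
    simpa using tendsto_norm_sub_of_tendsto_norm_one_sub_smul_add_smul
      (u := fun n => S₁^[n] (y n) - p) (v := fun n => S₂^[n] (y n) - p) hε hα
      (eventually_atTop.2 ⟨1, fun n hn => hS₁ _ (hyK n hn) n hn⟩)
      (eventually_atTop.2 ⟨1, fun n hn => hS₂ _ (hyK n hn) n hn⟩) (ha0.one_add_mul_add hb0 hyl)
      ((hxl.comp (tendsto_add_atTop_nat 1)).congr' (eventually_atTop.2 ⟨1, fun n hn => by
        simp only [Function.comp_apply, hx n hn]; congr 1; module⟩))
  have hΔ : Tendsto (fun n => ‖x n - S₁^[n] (x n)‖) atTop (𝓝 0) := by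
    simpa using tendsto_norm_sub_of_tendsto_norm_one_sub_smul_add_smul
      (u := fun n => x n - p) (v := fun n => S₁^[n] (x n) - p) hε hβ
      (Eventually.of_forall hxp) (eventually_atTop.2 ⟨1, fun n hn => hS₁ _ (hxK n) n hn⟩)
      (ha0.one_add_mul_add hb0 hxl)
      (hyl.congr' (eventually_atTop.2 ⟨1, fun n hn => by rw [hy n hn]; congr 1; module⟩))
  obtain ⟨hstep, hΔ₂⟩ := tendsto_norm_succ_sub_and_norm_sub_iterate hL hLip₁ hLip₂ hα₀ hβ₀ hxK
    hyK hy hx hΓ hΔ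
  exact ⟨hstep, hΔ, hΔ₂⟩

end Iteration

theorem stmt_14_general {E : Type*} [NormedAddCommGroup E] [NormedSpace ℝ E]
    [UniformConvexSpace E]
    (K : Set E) (hKconvex : Convex ℝ K)
    (P T₁ T₂ : E → E)
    (hPrange : ∀ x, P x ∈ K)
    (hPretr : ∀ x ∈ K, P x = x)
    (L : ℝ) (hL : 0 < L)
    (hLip₁ : ∀ x ∈ K, ∀ y ∈ K, ∀ n ≥ 1, ‖(P ∘ T₁)^[n] x - (P ∘ T₁)^[n] y‖ ≤ L * ‖x - y‖)
    (hLip₂ : ∀ x ∈ K, ∀ y ∈ K, ∀ n ≥ 1, ‖(P ∘ T₂)^[n] x - (P ∘ T₂)^[n] y‖ ≤ L * ‖x - y‖)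
    (μ lam : ℕ → ℝ)
    (hμ : ∀ n, 0 ≤ μ n) (hlam : ∀ n, 0 ≤ lam n)
    (hμs : Summable μ) (hlams : Summable lam)
    (φ : ℝ → ℝ) (hφmono : StrictMonoOn φ (Set.Ici (0 : ℝ)))
    (M Mstar : ℝ)
    (hgrowth : ∀ κ ≥ M, φ κ ≤ Mstar * κ)
    (hT₁ : ∀ x ∈ K, ∀ y ∈ K, ∀ n ≥ 1,
      ‖(P ∘ T₁)^[n] x - (P ∘ T₁)^[n] y‖ ≤ ‖x - y‖ + μ n * φ ‖x - y‖ + lam n)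
    (hT₂ : ∀ x ∈ K, ∀ y ∈ K, ∀ n ≥ 1,
      ‖(P ∘ T₂)^[n] x - (P ∘ T₂)^[n] y‖ ≤ ‖x - y‖ + μ n * φ ‖x - y‖ + lam n)
    (F : Set E) (hF : F = {x ∈ K | T₁ x = x ∧ T₂ x = x}) (hFne : F.Nonempty)
    (ε : ℝ) (hε : ε ∈ Set.Ioo (0 : ℝ) 1)
    (α β : ℕ → ℝ)
    (hα : ∀ n, α n ∈ Set.Icc ε (1 - ε)) (hβ : ∀ n, β n ∈ Set.Icc ε (1 - ε))
    (x y : ℕ → E) (hxK : ∀ n, x n ∈ K)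
    (hy : ∀ n ≥ 1, y n = (1 - β n) • x n + β n • (P ∘ T₁)^[n] (x n))
    (hx : ∀ n ≥ 1, x (n + 1) = (1 - α n) • (P ∘ T₁)^[n] (y n) + α n • (P ∘ T₂)^[n] (y n)) :
    Filter.Tendsto (fun n => ‖x n - (P ∘ T₁) (x n)‖) Filter.atTop (nhds 0) ∧
    Filter.Tendsto (fun n => ‖x n - (P ∘ T₂) (x n)‖) Filter.atTop (nhds 0) := by
  subst hF
  obtain ⟨p, hpK, hp₁, hp₂⟩ := hFne
  obtain ⟨C, D, hC, hD, hφ⟩ := hφmono.monotoneOn.exists_le_add_mul_of_le_mul hgrowth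
  have hS₁K : MapsTo (P ∘ T₁) K K := fun z _ => hPrange (T₁ z)
  have hS₂K : MapsTo (P ∘ T₂) K K := fun z _ => hPrange (T₂ z)
  have hT₁' : IsTotalAsymptoticallyNonexpansiveOn (P ∘ T₁) K μ lam φ := hT₁
  have hT₂' : IsTotalAsymptoticallyNonexpansiveOn (P ∘ T₂) K μ lam φ := hT₂
  have hfix₁ : (P ∘ T₁) p = p := by rw [Function.comp_apply, hp₁, hPretr p hpK]
  have hfix₂ : (P ∘ T₂) p = p := by rw [Function.comp_apply, hp₂, hPretr p hpK]
  obtain ⟨hstep, hΔ₁, hΔ₂⟩ := tendsto_norm_sub_iterate_of_two_step_iteration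
    (a := fun n => D * μ n) (b := fun n => C * μ n + lam n) hKconvex hS₁K hL.le hLip₁ hLip₂
    (fun z hz n hn => hT₁'.norm_iterate_sub_le hμ hφ hpK hfix₁ hz hn)
    (fun z hz n hn => hT₂'.norm_iterate_sub_le hμ hφ hpK hfix₂ hz hn)
    (fun n => mul_nonneg hD (hμ n)) (fun n => add_nonneg (mul_nonneg hC (hμ n)) (hlam n))
    (hμs.mul_left D) ((hμs.mul_left C).add hlams) hε.1 hα hβ hxK hy hx
  exact ⟨tendsto_norm_sub_apply_of_tendsto_norm_sub_iterate hL.le hS₁K hLip₁ hxK hstep hΔ₁,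
    tendsto_norm_sub_apply_of_tendsto_norm_sub_iterate hL.le hS₂K hLip₂ hxK hstep hΔ₂⟩

theorem stmt_14 {E : Type*} [NormedAddCommGroup E] [NormedSpace ℝ E]
    [UniformConvexSpace E] [CompleteSpace E]
    (K : Set E) (hKne : K.Nonempty) (hKclosed : IsClosed K) (hKconvex : Convex ℝ K)
    (P T₁ T₂ : E → E)
    (hPrange : ∀ x, P x ∈ K)
    (hPnonexp : ∀ x y, ‖P x - P y‖ ≤ ‖x - y‖)
    (hPretr : ∀ x ∈ K, P x = x)
    (L : ℝ) (hL : 0 < L)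
    (hLip₁ : ∀ x ∈ K, ∀ y ∈ K, ∀ n ≥ 1, ‖(P ∘ T₁)^[n] x - (P ∘ T₁)^[n] y‖ ≤ L * ‖x - y‖)
    (hLip₂ : ∀ x ∈ K, ∀ y ∈ K, ∀ n ≥ 1, ‖(P ∘ T₂)^[n] x - (P ∘ T₂)^[n] y‖ ≤ L * ‖x - y‖)
    (μ lam : ℕ → ℝ)
    (hμ : ∀ n, 0 ≤ μ n) (hlam : ∀ n, 0 ≤ lam n)
    (hμs : Summable μ) (hlams : Summable lam)
    (φ : ℝ → ℝ) (hφmono : StrictMonoOn φ (Set.Ici (0 : ℝ)))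
    (hφcont : ContinuousOn φ (Set.Ici (0 : ℝ))) (hφ0 : φ 0 = 0)
    (M Mstar : ℝ) (hM : 0 < M) (hMstar : 0 < Mstar)
    (hgrowth : ∀ κ ≥ M, φ κ ≤ Mstar * κ)
    (hT₁ : ∀ x ∈ K, ∀ y ∈ K, ∀ n ≥ 1,
      ‖(P ∘ T₁)^[n] x - (P ∘ T₁)^[n] y‖ ≤ ‖x - y‖ + μ n * φ ‖x - y‖ + lam n)
    (hT₂ : ∀ x ∈ K, ∀ y ∈ K, ∀ n ≥ 1,
      ‖(P ∘ T₂)^[n] x - (P ∘ T₂)^[n] y‖ ≤ ‖x - y‖ + μ n * φ ‖x - y‖ + lam n)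
    (F : Set E) (hF : F = {x ∈ K | T₁ x = x ∧ T₂ x = x}) (hFne : F.Nonempty)
    (ε : ℝ) (hε : ε ∈ Set.Ioo (0 : ℝ) 1)
    (α β : ℕ → ℝ)
    (hα : ∀ n, α n ∈ Set.Icc ε (1 - ε)) (hβ : ∀ n, β n ∈ Set.Icc ε (1 - ε))
    (x y : ℕ → E) (hxK : ∀ n, x n ∈ K)
    (hy : ∀ n ≥ 1, y n = (1 - β n) • x n + β n • (P ∘ T₁)^[n] (x n))
    (hx : ∀ n ≥ 1, x (n + 1) = (1 - α n) • (P ∘ T₁)^[n] (y n) + α n • (P ∘ T₂)^[n] (y n)) :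
    Filter.Tendsto (fun n => ‖x n - (P ∘ T₁) (x n)‖) Filter.atTop (nhds 0) ∧
    Filter.Tendsto (fun n => ‖x n - (P ∘ T₂) (x n)‖) Filter.atTop (nhds 0) :=
  stmt_14_general K hKconvex P T₁ T₂ hPrange hPretr L hL hLip₁ hLip₂ μ lam hμ hlam hμs hlams φ
    hφmono M Mstar hgrowth hT₁ hT₂ F hF hFne ε hε α β hα hβ x y hxK hy hx
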